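/- arXiv:1904.05224 — 5 statements merged into one kernel-verified Lean document; each statement's English description precedes it below -/
import Mathlib

section
/- With the pseudo-inverse setup below, the linearized operator DT[ω₀;0], which acts componentwise by (ν_l^i, a_l^i) ↦ ( (D_l^i/2)((λ_l^i)² − (v_l^i)²) ν_l^i + D_l^i λ_l^i v_l^i a_l^i , D_l^i (λ_l^i)² a_l^i ), is a linear isomorphism from Ω_{1/2} onto Ω_1: for every w ∈ Ω_1 the equation DT[ω₀;0]ω = w has a unique solution ω ∈ Ω_{1/2}, and there exists a constant C>0 with |||ω|||_{1/2} ≤ C |||w|||_1. -/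
open MeasureTheory
open scoped ENNReal NNReal

namespace PredPrey6

/-- Data of the two-species pseudo-inverse setup: the escape parameter `α`, the interaction
kernels `S_ρ, S_η, K` with odd antiderivatives `G_ρ, G_η, H`, the bump masses `z_l^i` and the
centres `cm_l^i`. -/
structure Setup (Nρ Nη : ℕ) where
  α : ℝ
  Sρ : ℝ → ℝ
  Sη : ℝ → ℝ
  K : ℝ → ℝ
  Gρ : ℝ → ℝ
  Gη : ℝ → ℝ
  H : ℝ → ℝ
  zρ : Fin Nρ → ℝ
  zη : Fin Nη → ℝ
  cmρ : Fin Nρ → ℝ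
  cmη : Fin Nη → ℝ

/-- Unified index `(l,i)` for the bumps of the two species. -/
abbrev Idx (Nρ Nη : ℕ) := Sum (Fin Nρ) (Fin Nη)

/-- Elements `ω = (v, λ)`: families of profiles `v_l^i` and of reals `λ_l^i`. -/
abbrev El (Nρ Nη : ℕ) := (Idx Nρ Nη → ℝ → ℝ) × (Idx Nρ Nη → ℝ)

namespace Setup

variable {Nρ Nη : ℕ} (P : Setup Nρ Nη)

/-- Mass of the bump `k`. -/
def z : Idx Nρ Nη → ℝ := Sum.elim P.zρ P.zη

/-- Centre of the bump `k`. -/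
def cm : Idx Nρ Nη → ℝ := Sum.elim P.cmρ P.cmη

/-- Interaction kernel between bumps `k` and `j` (self or cross). -/
def ker : Idx Nρ Nη → Idx Nρ Nη → ℝ → ℝ
  | .inl _, .inl _ => P.Sρ
  | .inr _, .inr _ => P.Sη
  | _, _ => P.K

/-- Coupling coefficient: `1` within a species and for the predators, `−α` for the prey. -/
def co : Idx Nρ Nη → Idx Nρ Nη → ℝ
  | .inr _, .inl _ => -P.α
  | _, _ => 1

/-- Left endpoint `ẑ_l^i` of the interval `J_l^i` in the partition of `[0,z_l]`. -/
def zhat : Idx Nρ Nη → ℝ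
  | .inl i => ∑ j ∈ Finset.univ.filter fun j => j < i, P.zρ j
  | .inr i => ∑ j ∈ Finset.univ.filter fun j => j < i, P.zη j

/-- Right endpoint `z̃_l^i` of `J_l^i`. -/
def ztil (k : Idx Nρ Nη) : ℝ := P.zhat k + P.z k

/-- Midpoint `z̄_l^i` of `J_l^i`. -/
noncomputable def zbar (k : Idx Nρ Nη) : ℝ := P.zhat k + P.z k / 2

/-- Stationarity quantities `B_l^i`. -/
noncomputable def B (k : Idx Nρ Nη) : ℝ :=
  ∑ j, P.co k j * deriv (P.ker k j) (P.cm k - P.cm j) * P.z j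

/-- Stability quantities `D_l^i`. -/
noncomputable def D (k : Idx Nρ Nη) : ℝ :=
  -∑ j, P.co k j * deriv (deriv (P.ker k j)) (P.cm k - P.cm j) * P.z j

/-- The norm `|||ω|||_γ` (with values in `ℝ≥0∞`). -/
noncomputable def normG (γ : ℝ) (ω : El Nρ Nη) : ℝ≥0∞ :=
  (∑ k, ((⨆ zv ∈ Set.Ico (P.zbar k) (P.ztil k), (‖ω.1 k zv‖₊ : ℝ≥0∞)) +
      (‖ω.2 k‖₊ : ℝ≥0∞))) +
    ∑ k, ⨆ zv ∈ Set.Ico (P.zbar k) (P.ztil k),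
      ENNReal.ofReal (|ω.2 k - ω.1 k zv| / (P.ztil k - zv) ^ γ)

/-- `ω₀` is the Barenblatt-type solution of the limiting system `T[ω;0]=0`:
`λ_l^i = (3(z̃−z̄)/D)^{1/3}` and `v_l^i` the increasing solution of the cubic equation
with `v_l^i(z̄)=0`. -/
def IsOmega0 (ω₀ : El Nρ Nη) : Prop :=
  (∀ k, ω₀.2 k = (3 * (P.ztil k - P.zbar k) / P.D k) ^ ((1 : ℝ) / 3)) ∧
  (∀ k, ω₀.1 k (P.zbar k) = 0) ∧
  (∀ k, StrictMonoOn (ω₀.1 k) (Set.Ico (P.zbar k) (P.ztil k))) ∧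
  (∀ k, ∀ zv ∈ Set.Ico (P.zbar k) (P.ztil k),
    (P.zbar k - zv) + P.D k / 6 * (3 * ω₀.2 k ^ 2 * ω₀.1 k zv - ω₀.1 k zv ^ 3) = 0)

/-- The linearized operator `DT[ω₀;0]`, acting componentwise by
`(ν,a) ↦ ((D/2)(λ²−v²)ν + Dλva , Dλ²a)`. -/
noncomputable def DT0 (ω₀ u : El Nρ Nη) : El Nρ Nη :=
  (fun k zv => P.D k / 2 * (ω₀.2 k ^ 2 - ω₀.1 k zv ^ 2) * u.1 k zv +
      P.D k * ω₀.2 k * ω₀.1 k zv * u.2 k,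
   fun k => P.D k * ω₀.2 k ^ 2 * u.2 k)

end Setup

end PredPrey6

open PredPrey6 PredPrey6.Setup

/-!
On each bump the operator is triangular: the second equation gives `a = w.2 / (D λ²)`, and the
first is then solved pointwise by dividing by `(D/2)(λ² - v²)`, which degenerates at the edge
`z̃` where `v → λ`. The Barenblatt relation `z̃ - z = (D/6)(λ - v)²(2λ + v)` makes `λ - v`
comparable to `√(z̃ - z)`, and the identity
`ν - a = ((w.1 - w.2) + (D/2)(λ - v)² a) / ((D/2)(λ - v)(λ + v))`
turns the Lipschitz bound `|w.2 - w.1 z| ≤ R (z̃ - z)` of `Ω_1` into `|ν - a| ≲ λ - v ≲ √(z̃ - z)`,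
which is the Hölder-`1/2` bound of `Ω_{1/2}`.
-/

namespace PredPrey6

lemma sub_eq_of_barenblatt_cubic {D lam zb zt z u : ℝ} (hcube : D * lam ^ 3 = 3 * (zt - zb))
    (hu : (zb - z) + D / 6 * (3 * lam ^ 2 * u - u ^ 3) = 0) :
    zt - z = D / 6 * (lam - u) ^ 2 * (2 * lam + u) := by
  linear_combination (-1 / 3 : ℝ) * hcube + hu

lemma barenblatt_gap_mono {lam u u' : ℝ} (hlam : 0 ≤ lam) (hu : lam ≤ u) (huu' : u ≤ u') :
    (lam - u) ^ 2 * (2 * lam + u) ≤ (lam - u') ^ 2 * (2 * lam + u') := by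
  gcongr ?_ * ?_
  · linarith
  · nlinarith
  · linarith

/-- Past `λ`, `(λ - u)² (2λ + u)` increases with `u`, whereas `b - z` decreases in `z`. -/
lemma mem_Ico_of_barenblatt_gap {v : ℝ → ℝ} {a b c lam : ℝ} (hc : 0 ≤ c) (hlam : 0 ≤ lam)
    (hv : StrictMonoOn v (Set.Ico a b)) (hva : v a = 0)
    (hgap : ∀ z ∈ Set.Ico a b, b - z = c * ((lam - v z) ^ 2 * (2 * lam + v z)))
    {z : ℝ} (hz : z ∈ Set.Ico a b) : v z ∈ Set.Ico 0 lam := by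
  refine ⟨hva ▸ hv.monotoneOn ⟨le_rfl, hz.1.trans_lt hz.2⟩ hz hz.1, ?_⟩
  by_contra! hle
  have hz' : (z + b) / 2 ∈ Set.Ico a b := ⟨by linarith [hz.1, hz.2], by linarith [hz.2]⟩
  have hlt : v z < v ((z + b) / 2) := hv hz hz' (by linarith [hz.2])
  have := mul_le_mul_of_nonneg_left (barenblatt_gap_mono hlam hle hlt.le) hc
  linarith [hgap z hz, hgap _ hz', hz.2]

lemma linearized_solution_sub_eq {D lam u a f : ℝ} (hD : D ≠ 0) (hlu : lam - u ≠ 0)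
    (hlu' : lam + u ≠ 0) :
    (f - D * lam * u * a) / (D / 2 * (lam ^ 2 - u ^ 2)) - a =
      (D / 2 * (lam - u) ^ 2 * a + (f - D * lam ^ 2 * a)) / (D / 2 * (lam - u) * (lam + u)) := by
  rw [sq_sub_sq, mul_comm (lam + u), ← mul_assoc]
  field_simp
  ring

lemma abs_linearized_solution_sub_le {D lam u a f R : ℝ} (hD : 0 < D) (hu : 0 ≤ u)
    (hul : u < lam) (hR : 0 ≤ R)
    (hf : |D * lam ^ 2 * a - f| ≤ R * (D / 6 * (lam - u) ^ 2 * (2 * lam + u))) :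
    |(f - D * lam * u * a) / (D / 2 * (lam ^ 2 - u ^ 2)) - a| ≤ (lam - u) * (|a| / lam + R) := by
  have ht : 0 < lam - u := by linarith
  have hlam : 0 < lam := by linarith
  have hden : 0 < D / 2 * (lam - u) * (lam + u) := by positivity
  rw [linearized_solution_sub_eq hD.ne' ht.ne' (by positivity), abs_div, abs_of_pos hden,
    div_le_iff₀ hden]
  have ha : |a| ≤ |a| * (lam + u) / lam := by
    rw [le_div_iff₀ hlam]
    nlinarith [abs_nonneg a]
  calc |D / 2 * (lam - u) ^ 2 * a + (f - D * lam ^ 2 * a)|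
      ≤ D / 2 * (lam - u) ^ 2 * |a| + R * (D / 6 * (lam - u) ^ 2 * (2 * lam + u)) := by
        refine (abs_add_le _ _).trans (add_le_add ?_ ?_)
        · rw [abs_mul, abs_of_nonneg (by positivity)]
        · rwa [abs_sub_comm]
    _ ≤ D / 2 * (lam - u) ^ 2 * (|a| * (lam + u) / lam) +
          R * (D / 6 * (lam - u) ^ 2 * (3 * lam + 3 * u)) := by
        gcongr <;> linarith
    _ = (lam - u) * (|a| / lam + R) * (D / 2 * (lam - u) * (lam + u)) := by
        field_simp
        ring

lemma sub_le_sqrt_mul_sqrt_barenblatt_gap {D lam u : ℝ} (hD : 0 < D) (hlam : 0 < lam)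
    (hu : 0 ≤ u) (hul : u ≤ lam) :
    lam - u ≤ √(3 / (D * lam)) * √(D / 6 * (lam - u) ^ 2 * (2 * lam + u)) := by
  rw [← Real.sqrt_mul (by positivity), Real.le_sqrt (by linarith) (by positivity)]
  have e : 3 / (D * lam) * (D / 6 * (lam - u) ^ 2 * (2 * lam + u)) =
      (lam - u) ^ 2 + (lam - u) ^ 2 * u / (2 * lam) := by
    field_simp
    ring
  rw [e]
  have : 0 ≤ (lam - u) ^ 2 * u / (2 * lam) := by positivity
  linarith

end PredPrey6

namespace PredPrey6.Setup

variable {Nρ Nη : ℕ} {P : Setup Nρ Nη} {ω₀ : El Nρ Nη} {k : Idx Nρ Nη}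

lemma ztil_sub_zbar : P.ztil k - P.zbar k = P.z k / 2 := by
  simp only [ztil, zbar]
  ring

namespace IsOmega0

lemma lam_pos (hω₀ : P.IsOmega0 ω₀) (hz : 0 < P.z k) (hD : 0 < P.D k) : 0 < ω₀.2 k := by
  rw [hω₀.1 k, ztil_sub_zbar]
  positivity

lemma D_mul_lam_pow_three (hω₀ : P.IsOmega0 ω₀) (hz : 0 < P.z k) (hD : 0 < P.D k) :
    P.D k * ω₀.2 k ^ 3 = 3 * (P.ztil k - P.zbar k) := by
  have hpos : 0 ≤ 3 * (P.ztil k - P.zbar k) / P.D k := by rw [ztil_sub_zbar]; positivity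
  rw [hω₀.1 k, ← Real.rpow_natCast, ← Real.rpow_mul hpos]
  norm_num
  field_simp

lemma ztil_sub_eq (hω₀ : P.IsOmega0 ω₀) (hz : 0 < P.z k) (hD : 0 < P.D k) {zv : ℝ}
    (hzv : zv ∈ Set.Ico (P.zbar k) (P.ztil k)) :
    P.ztil k - zv = P.D k / 6 * (ω₀.2 k - ω₀.1 k zv) ^ 2 * (2 * ω₀.2 k + ω₀.1 k zv) :=
  sub_eq_of_barenblatt_cubic (hω₀.D_mul_lam_pow_three hz hD) (hω₀.2.2.2 k zv hzv)

lemma mem_Ico (hω₀ : P.IsOmega0 ω₀) (hz : 0 < P.z k) (hD : 0 < P.D k) {zv : ℝ}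
    (hzv : zv ∈ Set.Ico (P.zbar k) (P.ztil k)) : ω₀.1 k zv ∈ Set.Ico 0 (ω₀.2 k) :=
  mem_Ico_of_barenblatt_gap (by positivity) (hω₀.lam_pos hz hD).le (hω₀.2.2.1 k) (hω₀.2.1 k)
    (fun _ h => (hω₀.ztil_sub_eq hz hD h).trans (mul_assoc _ _ _)) hzv

lemma denom_pos (hω₀ : P.IsOmega0 ω₀) (hz : 0 < P.z k) (hD : 0 < P.D k) {zv : ℝ}
    (hzv : zv ∈ Set.Ico (P.zbar k) (P.ztil k)) :
    0 < P.D k / 2 * (ω₀.2 k ^ 2 - ω₀.1 k zv ^ 2) := by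
  obtain ⟨h0, hlt⟩ := hω₀.mem_Ico hz hD hzv
  have := sub_pos.2 (pow_lt_pow_left₀ hlt h0 two_ne_zero)
  positivity

end IsOmega0

variable (P) in
noncomputable def DT0inv (ω₀ w : El Nρ Nη) : El Nρ Nη :=
  (fun k zv => (w.1 k zv - P.D k * ω₀.2 k * ω₀.1 k zv * (w.2 k / (P.D k * ω₀.2 k ^ 2))) /
      (P.D k / 2 * (ω₀.2 k ^ 2 - ω₀.1 k zv ^ 2)),
   fun k => w.2 k / (P.D k * ω₀.2 k ^ 2))

lemma DT0_snd_eq_iff (hω₀ : P.IsOmega0 ω₀) (hz : 0 < P.z k) (hD : 0 < P.D k)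
    {u w : El Nρ Nη} : (P.DT0 ω₀ u).2 k = w.2 k ↔ u.2 k = (P.DT0inv ω₀ w).2 k := by
  have := hω₀.lam_pos hz hD
  rw [DT0inv, DT0, eq_div_iff (by positivity), mul_comm]

lemma DT0_fst_eq_iff (hω₀ : P.IsOmega0 ω₀) (hz : 0 < P.z k) (hD : 0 < P.D k)
    {u w : El Nρ Nη} (h2 : u.2 k = (P.DT0inv ω₀ w).2 k) {zv : ℝ}
    (hzv : zv ∈ Set.Ico (P.zbar k) (P.ztil k)) :
    (P.DT0 ω₀ u).1 k zv = w.1 k zv ↔ u.1 k zv = (P.DT0inv ω₀ w).1 k zv := by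
  rw [DT0inv, DT0, eq_div_iff (hω₀.denom_pos hz hD hzv).ne', ← eq_sub_iff_add_eq, mul_comm]
  simp only [h2, DT0inv]

lemma abs_DT0inv_sub_le (hω₀ : P.IsOmega0 ω₀) (hz : 0 < P.z k) (hD : 0 < P.D k)
    {w : El Nρ Nη} {R : ℝ} (hR : 0 ≤ R)
    (hw : ∀ zv ∈ Set.Ico (P.zbar k) (P.ztil k), |w.2 k - w.1 k zv| ≤ R * (P.ztil k - zv))
    {zv : ℝ} (hzv : zv ∈ Set.Ico (P.zbar k) (P.ztil k)) :
    |(P.DT0inv ω₀ w).1 k zv - (P.DT0inv ω₀ w).2 k| ≤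
      (ω₀.2 k - ω₀.1 k zv) * (|(P.DT0inv ω₀ w).2 k| / ω₀.2 k + R) := by
  obtain ⟨h0, hlt⟩ := hω₀.mem_Ico hz hD hzv
  have hlam := hω₀.lam_pos hz hD
  refine abs_linearized_solution_sub_le hD h0 hlt hR ?_
  rw [mul_div_cancel₀ _ (by positivity), ← hω₀.ztil_sub_eq hz hD hzv]
  exact hw zv hzv

variable (P) in
noncomputable def supPart (ω : El Nρ Nη) (k : Idx Nρ Nη) : ℝ≥0∞ :=
  (⨆ zv ∈ Set.Ico (P.zbar k) (P.ztil k), (‖ω.1 k zv‖₊ : ℝ≥0∞)) + ‖ω.2 k‖₊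

variable (P) in
noncomputable def holderPart (γ : ℝ) (ω : El Nρ Nη) (k : Idx Nρ Nη) : ℝ≥0∞ :=
  ⨆ zv ∈ Set.Ico (P.zbar k) (P.ztil k),
    ENNReal.ofReal (|ω.2 k - ω.1 k zv| / (P.ztil k - zv) ^ γ)

lemma normG_eq_sum (γ : ℝ) (ω : El Nρ Nη) :
    P.normG γ ω = ∑ k, (P.supPart ω k + P.holderPart γ ω k) :=
  Finset.sum_add_distrib.symm

lemma abs_sub_le_toReal_holderPart_one {w : El Nρ Nη} (hw : P.holderPart 1 w k ≠ ⊤) {zv : ℝ}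
    (hzv : zv ∈ Set.Ico (P.zbar k) (P.ztil k)) :
    |w.2 k - w.1 k zv| ≤ (P.holderPart 1 w k).toReal * (P.ztil k - zv) := by
  rw [← div_le_iff₀ (sub_pos.2 hzv.2), ← Real.rpow_one (P.ztil k - zv),
    ← ENNReal.ofReal_le_iff_le_toReal hw]
  exact le_iSup₂ (f := fun zv (_ : zv ∈ Set.Ico (P.zbar k) (P.ztil k)) =>
    ENNReal.ofReal (|w.2 k - w.1 k zv| / (P.ztil k - zv) ^ (1 : ℝ))) zv hzv

variable (P) in
/-- With `a = w.2 k / (D λ²)` and `μ = λ + √(3/(Dλ))`, the `k`-th part of `|||DT0inv w|||_{1/2}`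
is at most `2|a| + μ (|a|/λ + R)`, and this is at most `invBound k * (|w.2 k| + R)`. -/
noncomputable def invBound (ω₀ : El Nρ Nη) (k : Idx Nρ Nη) : ℝ :=
  (2 + (ω₀.2 k + √(3 / (P.D k * ω₀.2 k))) / ω₀.2 k + (ω₀.2 k + √(3 / (P.D k * ω₀.2 k)))) *
    (1 / (P.D k * ω₀.2 k ^ 2) + 1)

lemma invBound_nonneg (hω₀ : P.IsOmega0 ω₀) (hz : 0 < P.z k) (hD : 0 < P.D k) :
    0 ≤ P.invBound ω₀ k := by
  have := hω₀.lam_pos hz hD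
  unfold invBound
  positivity

lemma supPart_add_holderPart_DT0inv_le (hω₀ : P.IsOmega0 ω₀) (hz : 0 < P.z k) (hD : 0 < P.D k)
    {w : El Nρ Nη} {R : ℝ} (hR : 0 ≤ R)
    (hw : ∀ zv ∈ Set.Ico (P.zbar k) (P.ztil k), |w.2 k - w.1 k zv| ≤ R * (P.ztil k - zv)) :
    P.supPart (P.DT0inv ω₀ w) k + P.holderPart (1 / 2) (P.DT0inv ω₀ w) k ≤
      ENNReal.ofReal (P.invBound ω₀ k * (|w.2 k| + R)) := by
  set a := (P.DT0inv ω₀ w).2 k with ha_def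
  set lam := ω₀.2 k
  set μ := lam + √(3 / (P.D k * lam))
  set M := |a| / lam + R
  have hlam : 0 < lam := hω₀.lam_pos hz hD
  have hM : 0 ≤ M := by positivity
  have hsup : (⨆ zv ∈ Set.Ico (P.zbar k) (P.ztil k), (‖(P.DT0inv ω₀ w).1 k zv‖₊ : ℝ≥0∞)) ≤
      ENNReal.ofReal (|a| + lam * M) := by
    refine iSup₂_le fun zv hzv => ?_
    rw [← enorm_eq_nnnorm, Real.enorm_eq_ofReal_abs]
    refine ENNReal.ofReal_le_ofReal ?_
    have hv := (hω₀.mem_Ico hz hD hzv).1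
    calc |(P.DT0inv ω₀ w).1 k zv| ≤ |a| + |(P.DT0inv ω₀ w).1 k zv - a| := by
          linarith [abs_sub_abs_le_abs_sub ((P.DT0inv ω₀ w).1 k zv) a]
      _ ≤ |a| + (lam - ω₀.1 k zv) * M := by gcongr; exact abs_DT0inv_sub_le hω₀ hz hD hR hw hzv
      _ ≤ |a| + lam * M := by gcongr; linarith
  have hholder : P.holderPart (1 / 2) (P.DT0inv ω₀ w) k ≤
      ENNReal.ofReal (√(3 / (P.D k * lam)) * M) := by
    refine iSup₂_le fun zv hzv => ENNReal.ofReal_le_ofReal ?_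
    obtain ⟨hv, hvlt⟩ := hω₀.mem_Ico hz hD hzv
    rw [div_le_iff₀ (by have := sub_pos.2 hzv.2; positivity), ← Real.sqrt_eq_rpow,
      hω₀.ztil_sub_eq hz hD hzv, abs_sub_comm]
    calc |(P.DT0inv ω₀ w).1 k zv - a| ≤ (lam - ω₀.1 k zv) * M :=
          abs_DT0inv_sub_le hω₀ hz hD hR hw hzv
      _ ≤ √(3 / (P.D k * lam)) *
            √(P.D k / 6 * (lam - ω₀.1 k zv) ^ 2 * (2 * lam + ω₀.1 k zv)) * M := by
          gcongr
          exact sub_le_sqrt_mul_sqrt_barenblatt_gap hD hlam hv hvlt.le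
      _ = _ := by ring
  have ha : |a| = |w.2 k| * (1 / (P.D k * lam ^ 2)) := by
    rw [ha_def, DT0inv, abs_div, abs_of_pos (mul_pos hD (pow_pos hlam 2)), mul_one_div]
  have hreal : (|a| + lam * M) + |a| + √(3 / (P.D k * lam)) * M ≤
      P.invBound ω₀ k * (|w.2 k| + R) := by
    calc (|a| + lam * M) + |a| + √(3 / (P.D k * lam)) * M = (2 + μ / lam) * |a| + μ * R := by
          ring
      _ ≤ (2 + μ / lam) * |a| + μ * R + (μ * |a| + (2 + μ / lam) * R) :=
          le_add_of_nonneg_right (by positivity)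
      _ = (2 + μ / lam + μ) * (|a| + R) := by ring
      _ ≤ (2 + μ / lam + μ) * (|a| + R + (|w.2 k| + R * (1 / (P.D k * lam ^ 2)))) :=
          mul_le_mul_of_nonneg_left (le_add_of_nonneg_right (by positivity)) (by positivity)
      _ = P.invBound ω₀ k * (|w.2 k| + R) := by
          rw [invBound, ha]
          ring
  calc P.supPart (P.DT0inv ω₀ w) k + P.holderPart (1 / 2) (P.DT0inv ω₀ w) k
      ≤ ENNReal.ofReal (|a| + lam * M) + ENNReal.ofReal |a| +
          ENNReal.ofReal (√(3 / (P.D k * lam)) * M) := by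
        refine add_le_add (add_le_add hsup ?_) hholder
        rw [← enorm_eq_nnnorm, Real.enorm_eq_ofReal_abs]
    _ = ENNReal.ofReal ((|a| + lam * M) + |a| + √(3 / (P.D k * lam)) * M) := by
        rw [← ENNReal.ofReal_add, ← ENNReal.ofReal_add] <;> positivity
    _ ≤ _ := ENNReal.ofReal_le_ofReal hreal

lemma normG_DT0inv_le (hz : ∀ k, 0 < P.z k) (hD : ∀ k, 0 < P.D k) (hω₀ : P.IsOmega0 ω₀)
    {w : El Nρ Nη} (hw : P.normG 1 w ≠ ⊤) :
    P.normG (1 / 2) (P.DT0inv ω₀ w) ≤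
      ENNReal.ofReal (1 + ∑ k, P.invBound ω₀ k) * P.normG 1 w := by
  have hfin : ∀ k, P.holderPart 1 w k ≠ ⊤ := fun k => by
    rw [normG_eq_sum, ENNReal.sum_ne_top] at hw
    exact (ENNReal.add_ne_top.1 (hw k (Finset.mem_univ k))).2
  have hC : ∀ k, P.invBound ω₀ k ≤ 1 + ∑ k, P.invBound ω₀ k := fun k => by
    have := Finset.single_le_sum (fun j _ => invBound_nonneg hω₀ (hz j) (hD j))
      (Finset.mem_univ k)
    linarith
  rw [normG_eq_sum, normG_eq_sum, Finset.mul_sum]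
  refine Finset.sum_le_sum fun k _ => ?_
  calc _ ≤ ENNReal.ofReal (P.invBound ω₀ k * (|w.2 k| + (P.holderPart 1 w k).toReal)) :=
        supPart_add_holderPart_DT0inv_le hω₀ (hz k) (hD k) ENNReal.toReal_nonneg
          fun _ hzv => abs_sub_le_toReal_holderPart_one (hfin k) hzv
    _ = ENNReal.ofReal (P.invBound ω₀ k) * (‖w.2 k‖₊ + P.holderPart 1 w k) := by
        rw [ENNReal.ofReal_mul (invBound_nonneg hω₀ (hz k) (hD k)),
          ENNReal.ofReal_add (abs_nonneg _) ENNReal.toReal_nonneg,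
          ENNReal.ofReal_toReal (hfin k), ← Real.enorm_eq_ofReal_abs, enorm_eq_nnnorm]
    _ ≤ _ := by
        gcongr
        · exact hC k
        · exact le_add_self

end PredPrey6.Setup

theorem stmt_6_general (Nρ Nη : ℕ) (P : Setup Nρ Nη)
    (hz : ∀ k, 0 < P.z k) (hD : ∀ k, 0 < P.D k)
    (ω₀ : El Nρ Nη) (hω₀ : P.IsOmega0 ω₀) :
    ∃ C : ℝ≥0∞, 0 < C ∧ C ≠ ⊤ ∧
      ∀ w : El Nρ Nη, P.normG 1 w ≠ ⊤ → (∀ k, w.1 k (P.zbar k) = 0) →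
        ∃ ω : El Nρ Nη,
          (∀ k, ω.1 k (P.zbar k) = 0) ∧
          P.normG (1 / 2) ω ≠ ⊤ ∧
          (∀ k, ∀ zv ∈ Set.Ico (P.zbar k) (P.ztil k), (P.DT0 ω₀ ω).1 k zv = w.1 k zv) ∧
          (∀ k, (P.DT0 ω₀ ω).2 k = w.2 k) ∧
          P.normG (1 / 2) ω ≤ C * P.normG 1 w ∧
          (∀ ω' : El Nρ Nη,
            (∀ k, ω'.1 k (P.zbar k) = 0) →
            P.normG (1 / 2) ω' ≠ ⊤ →
            (∀ k, ∀ zv ∈ Set.Ico (P.zbar k) (P.ztil k), (P.DT0 ω₀ ω').1 k zv = w.1 k zv) →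
            (∀ k, (P.DT0 ω₀ ω').2 k = w.2 k) →
            (∀ k, ∀ zv ∈ Set.Ico (P.zbar k) (P.ztil k), ω'.1 k zv = ω.1 k zv) ∧
              ω'.2 = ω.2) := by
  have hC : 0 < 1 + ∑ k, P.invBound ω₀ k :=
    add_pos_of_pos_of_nonneg one_pos
      (Finset.sum_nonneg fun k _ => invBound_nonneg hω₀ (hz k) (hD k))
  refine ⟨ENNReal.ofReal (1 + ∑ k, P.invBound ω₀ k), ENNReal.ofReal_pos.2 hC,
    ENNReal.ofReal_ne_top, fun w hw hw0 => ?_⟩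
  have hbound := normG_DT0inv_le hz hD hω₀ hw
  refine ⟨P.DT0inv ω₀ w, fun k => by simp [DT0inv, hw0 k, hω₀.2.1 k],
    ne_top_of_le_ne_top (ENNReal.mul_ne_top ENNReal.ofReal_ne_top hw) hbound,
    fun k _ hzv => (DT0_fst_eq_iff hω₀ (hz k) (hD k) rfl hzv).2 rfl,
    fun k => (DT0_snd_eq_iff hω₀ (hz k) (hD k)).2 rfl, hbound, ?_⟩
  intro ω' _ _ hfst hsnd
  have hsnd' : ∀ k, ω'.2 k = (P.DT0inv ω₀ w).2 k :=
    fun k => (DT0_snd_eq_iff hω₀ (hz k) (hD k)).1 (hsnd k)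
  exact ⟨fun k _ hzv => (DT0_fst_eq_iff hω₀ (hz k) (hD k) (hsnd' k) hzv).1 (hfst k _ hzv),
    funext hsnd'⟩

/-- The linearization `DT[ω₀;0]` is a linear isomorphism from `Ω_{1/2}` onto `Ω_1`:
for every `w ∈ Ω_1` the equation `DT[ω₀;0]ω = w` has a unique solution `ω ∈ Ω_{1/2}`, with
a uniform bound `|||ω|||_{1/2} ≤ C |||w|||_1`. -/
theorem stmt_6 (Nρ Nη : ℕ) (P : Setup Nρ Nη) (hα : 0 < P.α)
    (hSρ : ContDiff ℝ 3 P.Sρ) (hSη : ContDiff ℝ 3 P.Sη) (hK : ContDiff ℝ 3 P.K)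
    (hSρe : ∀ x, P.Sρ (-x) = P.Sρ x) (hSηe : ∀ x, P.Sη (-x) = P.Sη x)
    (hKe : ∀ x, P.K (-x) = P.K x)
    (hSρm : AntitoneOn P.Sρ (Set.Ici 0)) (hSηm : AntitoneOn P.Sη (Set.Ici 0))
    (hKm : AntitoneOn P.K (Set.Ici 0))
    (hSρnn : ∀ x, 0 ≤ P.Sρ x) (hSηnn : ∀ x, 0 ≤ P.Sη x) (hKnn : ∀ x, 0 ≤ P.K x)
    (hSρint : MeasureTheory.Integrable P.Sρ) (hSηint : MeasureTheory.Integrable P.Sη)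
    (hKint : MeasureTheory.Integrable P.K)
    (hGρ : ∀ x, HasDerivAt P.Gρ (P.Sρ x) x) (hGη : ∀ x, HasDerivAt P.Gη (P.Sη x) x)
    (hH : ∀ x, HasDerivAt P.H (P.K x) x)
    (hGρo : ∀ x, P.Gρ (-x) = -P.Gρ x) (hGηo : ∀ x, P.Gη (-x) = -P.Gη x)
    (hHo : ∀ x, P.H (-x) = -P.H x)
    (hGρ0 : P.Gρ 0 = 0) (hGη0 : P.Gη 0 = 0) (hH0 : P.H 0 = 0)
    (hz : ∀ k, 0 < P.z k) (hB : ∀ k, P.B k = 0) (hD : ∀ k, 0 < P.D k)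
    (ω₀ : El Nρ Nη) (hω₀ : P.IsOmega0 ω₀) :
    ∃ C : ℝ≥0∞, 0 < C ∧ C ≠ ⊤ ∧
      ∀ w : El Nρ Nη, P.normG 1 w ≠ ⊤ → (∀ k, w.1 k (P.zbar k) = 0) →
        ∃ ω : El Nρ Nη,
          (∀ k, ω.1 k (P.zbar k) = 0) ∧
          P.normG (1 / 2) ω ≠ ⊤ ∧
          (∀ k, ∀ zv ∈ Set.Ico (P.zbar k) (P.ztil k), (P.DT0 ω₀ ω).1 k zv = w.1 k zv) ∧
          (∀ k, (P.DT0 ω₀ ω).2 k = w.2 k) ∧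
          P.normG (1 / 2) ω ≤ C * P.normG 1 w ∧
          (∀ ω' : El Nρ Nη,
            (∀ k, ω'.1 k (P.zbar k) = 0) →
            P.normG (1 / 2) ω' ≠ ⊤ →
            (∀ k, ∀ zv ∈ Set.Ico (P.zbar k) (P.ztil k), (P.DT0 ω₀ ω').1 k zv = w.1 k zv) →
            (∀ k, (P.DT0 ω₀ ω').2 k = w.2 k) →
            (∀ k, ∀ zv ∈ Set.Ico (P.zbar k) (P.ztil k), ω'.1 k zv = ω.1 k zv) ∧
              ω'.2 = ω.2) :=
  stmt_6_general Nρ Nη P hz hD ω₀ hω₀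
end

section
/- Let 0<R_ρ<L_η<R_η, set cm=(L_η+R_η)/2, and let K:ℝ→ℝ be even and strictly concave on [−(R_ρ+R_η), R_ρ+R_η]. Then for all x∈[0,R_ρ] and all y∈[cm,R_η] one has K(x−y) − K(x+y) − K(x+y−2cm) + K(x−y+2cm) ≥ 0, and the inequality is strict whenever x>0 and y>cm. -/
lemma concave_pair {K : ℝ → ℝ} {S : Set ℝ} (h : ConcaveOn ℝ S K)
    {a b s t : ℝ} (ha : a ∈ S) (hb : b ∈ S) (has : a ≤ s) (hsb : s ≤ b)
    (hst : s + t = a + b) : K a + K b ≤ K s + K t := by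
  rcases eq_or_lt_of_le (has.trans hsb) with hab | hab
  · have hsa : s = a := le_antisymm (hab ▸ hsb) has
    have hta : t = b := by linarith
    rw [hsa, hta]
  · set l := (b - s) / (b - a) with hl
    have hba : 0 < b - a := by linarith
    have hlm : l * (b - a) = b - s := div_mul_cancel₀ _ hba.ne'
    have hl0 : 0 ≤ l := div_nonneg (by linarith) hba.le
    have hl1 : l ≤ 1 := by rw [hl, div_le_one hba]; linarith
    have hs : l * a + (1 - l) * b = s := by nlinarith [hlm]
    have ht : (1 - l) * a + l * b = t := by nlinarith [hlm]
    have H1 := h.2 ha hb hl0 (by linarith : (0:ℝ) ≤ 1 - l) (by ring)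
    have H2 := h.2 ha hb (by linarith : (0:ℝ) ≤ 1 - l) hl0 (by ring)
    simp only [smul_eq_mul] at H1 H2
    rw [hs] at H1; rw [ht] at H2
    linarith

lemma concave_pair_strict {K : ℝ → ℝ} {S : Set ℝ} (h : StrictConcaveOn ℝ S K)
    {a b s t : ℝ} (ha : a ∈ S) (hb : b ∈ S) (has : a < s) (hsb : s < b)
    (hst : s + t = a + b) : K a + K b < K s + K t := by
  set l := (b - s) / (b - a) with hl
  have hba : 0 < b - a := by linarith
  have hlm : l * (b - a) = b - s := div_mul_cancel₀ _ hba.ne'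
  have hl0 : 0 < l := div_pos (by linarith) hba
  have hl1 : l < 1 := by rw [hl, div_lt_one hba]; linarith
  have hs : l * a + (1 - l) * b = s := by nlinarith [hlm]
  have ht : (1 - l) * a + l * b = t := by nlinarith [hlm]
  have H1 := h.2 ha hb (by linarith : a ≠ b) hl0 (by linarith : (0:ℝ) < 1 - l) (by ring)
  have H2 := h.concaveOn.2 ha hb (by linarith : (0:ℝ) ≤ 1 - l) hl0.le (by ring)
  simp only [smul_eq_mul] at H1 H2
  rw [hs] at H1; rw [ht] at H2
  linarith

/-- Four-point inequality for an even, strictly concave kernel, showing positivity of the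
cross-interaction contribution in the construction of separated steady states. -/
theorem stmt_7 (Rρ Lη Rη cm : ℝ) (hRρ : 0 < Rρ) (hRL : Rρ < Lη) (hLR : Lη < Rη)
    (hcm : cm = (Lη + Rη) / 2) (K : ℝ → ℝ)
    (hKeven : ∀ x, K (-x) = K x)
    (hKconc : StrictConcaveOn ℝ (Set.Icc (-(Rρ + Rη)) (Rρ + Rη)) K) :
    ∀ x ∈ Set.Icc (0 : ℝ) Rρ, ∀ y ∈ Set.Icc cm Rη,
      0 ≤ K (x - y) - K (x + y) - K (x + y - 2 * cm) + K (x - y + 2 * cm) ∧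
      (0 < x → cm < y →
        0 < K (x - y) - K (x + y) - K (x + y - 2 * cm) + K (x - y + 2 * cm)) := by
  intro x hx y hy
  obtain ⟨hx0, hxR⟩ := hx
  obtain ⟨hyc, hyR⟩ := hy
  have hcm0 : 0 < cm := by rw [hcm]; linarith
  have ha : 2 * cm - x - y ∈ Set.Icc (-(Rρ + Rη)) (Rρ + Rη) := by
    constructor <;> [linarith; (rw [hcm] at *; linarith)]
  have hb : x + y ∈ Set.Icc (-(Rρ + Rη)) (Rρ + Rη) := by
    constructor <;> linarith
  have e1 : K (x - y) = K (y - x) := by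
    rw [show x - y = -(y - x) by ring, hKeven]
  have e2 : K (x + y - 2 * cm) = K (2 * cm - x - y) := by
    rw [show x + y - 2 * cm = -(2 * cm - x - y) by ring, hKeven]
  have e3 : x - y + 2 * cm = 2 * cm - y + x := by ring
  rw [e1, e2, e3]
  constructor
  · have := concave_pair hKconc.concaveOn ha hb
      (show 2 * cm - x - y ≤ y - x by linarith)
      (show y - x ≤ x + y by linarith)
      (show (y - x) + (2 * cm - y + x) = (2 * cm - x - y) + (x + y) by ring)
    linarith
  · intro hx' hy'
    have := concave_pair_strict hKconc ha hb
      (show 2 * cm - x - y < y - x by linarith)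
      (show y - x < x + y by linarith)
      (show (y - x) + (2 * cm - y + x) = (2 * cm - x - y) + (x + y) by ring)
    linarith
end

section
/- Let R_ρ, R_η > 0, α ∈ ℝ, and let S_ρ, S_η, K : ℝ→ℝ be C² and even. For p ∈ C¹([0,R_ρ]) with p(0)=0 and q ∈ C¹([0,R_η]) with q(0)=0, define f(x) = ∫₀^{R_ρ}(S_ρ(x−y)−S_ρ(x+y))p(y)dy + ∫₀^{R_η}(K(x−y)−K(x+y))q(y)dy for x∈[0,R_ρ] and g(x) = ∫₀^{R_η}(S_η(x−y)−S_η(x+y))q(y)dy − α∫₀^{R_ρ}(K(x−y)−K(x+y))p(y)dy for x∈[0,R_η]. Then f and g are C¹ with f(0)=g(0)=0, the map T:(p,q)↦(f,g) is linear, and T is compact for the W^{1,∞} norm: for every sequence (p_n,q_n) with sup_n(‖p_n‖_∞+‖p_n'‖_∞+‖q_n‖_∞+‖q_n'‖_∞)<∞, there is a subsequence along which f_n, f_n', g_n, g_n' all converge uniformly on their respective intervals. -/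
/-!
Both components are sums of operators `u ↦ ∫₀ʳ (W (x - y) - W (x + y)) u y dy`. Differentiating
under the integral sign replaces the kernel `W` by `W'`, so C² kernels give C¹ images, and an even
kernel makes the integrand vanish at `x = 0`. An operator of this form with a continuous kernel
turns uniform convergence of `u` on `[0, r]` into uniform convergence of the images on compact
sets. A sequence bounded in `W^{1,∞}` is uniformly bounded and equi-Lipschitz, so by Arzelà–Ascoli
it has a uniformly convergent subsequence; along it both the images and their derivatives (the
same operators with kernels `W'`) converge uniformly.
-/

open MeasureTheory Filter

/-- The first component of the Krein–Rutman operator. -/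
noncomputable def mixOpF (Sρ K : ℝ → ℝ) (Rρ Rη : ℝ) (p q : ℝ → ℝ) (x : ℝ) : ℝ :=
  (∫ y in (0 : ℝ)..Rρ, (Sρ (x - y) - Sρ (x + y)) * p y) +
    ∫ y in (0 : ℝ)..Rη, (K (x - y) - K (x + y)) * q y

/-- The second component of the Krein–Rutman operator. -/
noncomputable def mixOpG (Sη K : ℝ → ℝ) (Rρ Rη α : ℝ) (p q : ℝ → ℝ) (x : ℝ) : ℝ :=
  (∫ y in (0 : ℝ)..Rη, (Sη (x - y) - Sη (x + y)) * q y) -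
    α * ∫ y in (0 : ℝ)..Rρ, (K (x - y) - K (x + y)) * p y

open Set

/-- `oddConv W r u` is the convolution of `W` with the odd extension of `u|[0, r]` to `[-r, r]`. -/
noncomputable def oddConv (W : ℝ → ℝ) (r : ℝ) (u : ℝ → ℝ) (x : ℝ) : ℝ :=
  ∫ y in (0 : ℝ)..r, (W (x - y) - W (x + y)) * u y

section OddConv

variable {W : ℝ → ℝ} {r : ℝ} {u v : ℝ → ℝ}

theorem intervalIntegrable_oddKernel_mul (hW : Continuous W) (hu : IntervalIntegrable u volume 0 r)
    (x : ℝ) : IntervalIntegrable (fun y => (W (x - y) - W (x + y)) * u y) volume 0 r :=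
  hu.continuousOn_mul (by fun_prop)

theorem exists_bound_oddKernel (hW : Continuous W) {s : Set ℝ} (hs : IsCompact s) (r : ℝ) :
    ∃ C, ∀ x ∈ s, ∀ y ∈ uIcc 0 r, ‖W (x - y) - W (x + y)‖ ≤ C := by
  obtain ⟨C, hC⟩ := (hs.prod isCompact_uIcc).exists_bound_of_continuousOn
    (f := fun z : ℝ × ℝ => W (z.1 - z.2) - W (z.1 + z.2)) (by fun_prop)
  exact ⟨C, fun x hx y hy => hC (x, y) ⟨hx, hy⟩⟩

theorem hasDerivAt_oddConv (hW : ContDiff ℝ 1 W) (hu : IntervalIntegrable u volume 0 r) (x₀ : ℝ) :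
    HasDerivAt (oddConv W r u) (oddConv (deriv W) r u x₀) x₀ := by
  have hW' : Continuous (deriv W) := hW.continuous_deriv le_rfl
  obtain ⟨C, hC⟩ := exists_bound_oddKernel hW' (isCompact_closedBall x₀ 1) r
  refine (intervalIntegral.hasDerivAt_integral_of_dominated_loc_of_deriv_le
    (F' := fun x y => (deriv W (x - y) - deriv W (x + y)) * u y) (bound := fun y => C * ‖u y‖)
    (Metric.closedBall_mem_nhds x₀ one_pos)
    (.of_forall fun x => (intervalIntegrable_oddKernel_mul hW.continuous hu x).def'.1)
    (intervalIntegrable_oddKernel_mul hW.continuous hu x₀)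
    (intervalIntegrable_oddKernel_mul hW' hu x₀).def'.1 ?_ (hu.norm.const_mul C) ?_).2
  · refine .of_forall fun y hy x hx => ?_
    rw [norm_mul]
    exact mul_le_mul_of_nonneg_right (hC x hx y (uIoc_subset_uIcc hy)) (norm_nonneg _)
  · refine .of_forall fun y _ x _ => ?_
    have hd (z : ℝ) : HasDerivAt W (deriv W z) z := (hW.differentiable one_ne_zero z).hasDerivAt
    exact (((hd _).comp_sub_const x y).sub ((hd _).comp_add_const x y)).mul_const (u y)

theorem deriv_oddConv (hW : ContDiff ℝ 1 W) (hu : IntervalIntegrable u volume 0 r) :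
    deriv (oddConv W r u) = oddConv (deriv W) r u :=
  funext fun x => (hasDerivAt_oddConv hW hu x).deriv

theorem contDiff_oddConv (hW : ContDiff ℝ 2 W) (hu : IntervalIntegrable u volume 0 r) :
    ContDiff ℝ 1 (oddConv W r u) := by
  have hW1 : ContDiff ℝ 1 W := hW.of_le one_le_two
  refine contDiff_one_iff_deriv.2 ⟨fun x => (hasDerivAt_oddConv hW1 hu x).differentiableAt, ?_⟩
  rw [deriv_oddConv hW1 hu]
  exact continuous_iff_continuousAt.2 fun x => (hasDerivAt_oddConv hW.deriv' hu x).continuousAt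

theorem oddConv_zero_of_even (hWe : ∀ x, W (-x) = W x) (r : ℝ) (u : ℝ → ℝ) :
    oddConv W r u 0 = 0 := by
  simp [oddConv, hWe]

theorem oddConv_add (hW : Continuous W) (hu : IntervalIntegrable u volume 0 r)
    (hv : IntervalIntegrable v volume 0 r) :
    oddConv W r (u + v) = oddConv W r u + oddConv W r v := by
  ext x
  simp only [oddConv, Pi.add_apply, mul_add]
  exact intervalIntegral.integral_add (intervalIntegrable_oddKernel_mul hW hu x)
    (intervalIntegrable_oddKernel_mul hW hv x)

theorem oddConv_sub (hW : Continuous W) (hu : IntervalIntegrable u volume 0 r)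
    (hv : IntervalIntegrable v volume 0 r) :
    oddConv W r (u - v) = oddConv W r u - oddConv W r v := by
  ext x
  simp only [oddConv, Pi.sub_apply, mul_sub]
  exact intervalIntegral.integral_sub (intervalIntegrable_oddKernel_mul hW hu x)
    (intervalIntegrable_oddKernel_mul hW hv x)

theorem oddConv_smul (c : ℝ) : oddConv W r (c • u) = c • oddConv W r u := by
  ext x
  simp only [oddConv, Pi.smul_apply, smul_eq_mul, ← intervalIntegral.integral_const_mul,
    mul_left_comm c]

theorem norm_oddConv_le {x C δ : ℝ} (hC : ∀ y ∈ uIcc 0 r, ‖W (x - y) - W (x + y)‖ ≤ C)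
    (hu : ∀ y ∈ uIcc 0 r, ‖u y‖ ≤ δ) : ‖oddConv W r u x‖ ≤ C * δ * |r| := by
  refine (intervalIntegral.norm_integral_le_of_norm_le_const fun y hy => ?_).trans_eq
    (by rw [sub_zero])
  have hy := uIoc_subset_uIcc hy
  rw [norm_mul]
  exact mul_le_mul (hC y hy) (hu y hy) (norm_nonneg _) ((norm_nonneg _).trans (hC y hy))

theorem tendstoUniformlyOn_oddConv {ι : Type*} {l : Filter ι} [l.NeBot] {u : ι → ℝ → ℝ}
    (hW : Continuous W) {s : Set ℝ} (hs : IsCompact s) (hu : ∀ i, ContinuousOn (u i) (uIcc 0 r))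
    (huv : TendstoUniformlyOn u v l (uIcc 0 r)) :
    TendstoUniformlyOn (fun i => oddConv W r (u i)) (oddConv W r v) l s := by
  have hv : ContinuousOn v (uIcc 0 r) := huv.continuousOn (.of_forall hu)
  obtain ⟨C, hC⟩ := exists_bound_oddKernel hW hs r
  rw [Metric.tendstoUniformlyOn_iff] at huv ⊢
  intro ε hε
  obtain ⟨δ, hδ, hδε⟩ := exists_pos_mul_lt hε (C * |r|)
  filter_upwards [huv δ hδ] with i hi x hx
  rw [dist_eq_norm, ← Pi.sub_apply,
    ← oddConv_sub hW hv.intervalIntegrable (hu i).intervalIntegrable]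
  refine (norm_oddConv_le (δ := δ) (hC x hx) fun y hy => ?_).trans_lt (by rwa [mul_right_comm])
  exact (dist_eq_norm (v y) (u i y) ▸ hi y hy).le

end OddConv

theorem exists_subseq_tendstoUniformlyOn_of_lipschitzOnWith {α : Type*} [PseudoMetricSpace α]
    {s : Set α} (hs : IsCompact s) {u : ℕ → α → ℝ} {B : ℝ} {K : NNReal}
    (hB : ∀ n, ∀ x ∈ s, |u n x| ≤ B) (hK : ∀ n, LipschitzOnWith K (u n) s) :
    ∃ φ : ℕ → ℕ, StrictMono φ ∧ ∃ v : α → ℝ, TendstoUniformlyOn (fun k => u (φ k)) v atTop s := by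
  have : CompactSpace s := isCompact_iff_compactSpace.1 hs
  let U : ℕ → BoundedContinuousFunction s ℝ := fun n =>
    .mkOfCompact ⟨s.domRestrict (u n), (hK n).continuousOn.domRestrict⟩
  have hU : IsCompact (closure (range U)) := by
    refine BoundedContinuousFunction.arzela_ascoli (Icc (-B) B) isCompact_Icc _ ?_ ?_
    · rintro _ x ⟨n, rfl⟩
      exact abs_le.1 (hB n x x.2)
    · exact (LipschitzWith.uniformEquicontinuous _ K fun ⟨_, n, rfl⟩ =>
        lipschitzOnWith_iff_restrict.1 (hK n)).equicontinuous
  obtain ⟨L, -, φ, hφ, hL⟩ := hU.tendsto_subseq fun n => subset_closure (mem_range_self n)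
  classical
  let v : α → ℝ := fun x => if h : x ∈ s then L ⟨x, h⟩ else 0
  have hv : v ∘ Subtype.val = L := funext fun x => dif_pos x.2
  refine ⟨φ, hφ, v, ?_⟩
  rw [tendstoUniformlyOn_iff_tendstoUniformly_comp_coe, hv]
  exact BoundedContinuousFunction.tendsto_iff_tendstoUniformly.1 hL

theorem exists_subseq_tendstoUniformlyOn_uIcc {a b B : ℝ} {u : ℕ → ℝ → ℝ}
    (hu : ∀ n, DifferentiableOn ℝ (u n) (uIcc a b))
    (hB : ∀ n, ∀ x ∈ uIcc a b, |u n x| ≤ B ∧ |derivWithin (u n) (uIcc a b) x| ≤ B) :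
    ∃ φ : ℕ → ℕ, StrictMono φ ∧
      ∃ v : ℝ → ℝ, TendstoUniformlyOn (fun k => u (φ k)) v atTop (uIcc a b) := by
  refine exists_subseq_tendstoUniformlyOn_of_lipschitzOnWith isCompact_uIcc
    (fun n x hx => (hB n x hx).1) fun n =>
      (convex_uIcc a b).lipschitzOnWith_of_nnnorm_derivWithin_le (C := B.toNNReal) (hu n)
        fun x hx => ?_
  rw [← NNReal.coe_le_coe, coe_nnnorm, Real.coe_toNNReal']
  exact le_max_of_le_left (hB n x hx).2

section MixOp

variable {Sρ Sη K : ℝ → ℝ} {Rρ Rη α : ℝ}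

theorem mixOpF_eq (p q : ℝ → ℝ) :
    mixOpF Sρ K Rρ Rη p q = oddConv Sρ Rρ p + oddConv K Rη q := rfl

theorem mixOpG_eq (p q : ℝ → ℝ) :
    mixOpG Sη K Rρ Rη α p q = oddConv Sη Rη q - α • oddConv K Rρ p := rfl

variable {p q p₁ q₁ p₂ q₂ : ℝ → ℝ}

theorem contDiff_mixOpF (hSρ : ContDiff ℝ 2 Sρ) (hK : ContDiff ℝ 2 K)
    (hp : IntervalIntegrable p volume 0 Rρ) (hq : IntervalIntegrable q volume 0 Rη) :
    ContDiff ℝ 1 (mixOpF Sρ K Rρ Rη p q) :=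
  (contDiff_oddConv hSρ hp).add (contDiff_oddConv hK hq)

theorem contDiff_mixOpG (hSη : ContDiff ℝ 2 Sη) (hK : ContDiff ℝ 2 K)
    (hp : IntervalIntegrable p volume 0 Rρ) (hq : IntervalIntegrable q volume 0 Rη) :
    ContDiff ℝ 1 (mixOpG Sη K Rρ Rη α p q) :=
  (contDiff_oddConv hSη hq).sub ((contDiff_oddConv hK hp).const_smul α)

theorem mixOpF_zero_of_even (hSρe : ∀ x, Sρ (-x) = Sρ x) (hKe : ∀ x, K (-x) = K x) :
    mixOpF Sρ K Rρ Rη p q 0 = 0 := by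
  simp [mixOpF_eq, oddConv_zero_of_even hSρe, oddConv_zero_of_even hKe]

theorem mixOpG_zero_of_even (hSηe : ∀ x, Sη (-x) = Sη x) (hKe : ∀ x, K (-x) = K x) :
    mixOpG Sη K Rρ Rη α p q 0 = 0 := by
  simp [mixOpG_eq, oddConv_zero_of_even hSηe, oddConv_zero_of_even hKe]

theorem mixOpF_add (hSρ : Continuous Sρ) (hK : Continuous K)
    (hp₁ : IntervalIntegrable p₁ volume 0 Rρ) (hq₁ : IntervalIntegrable q₁ volume 0 Rη)
    (hp₂ : IntervalIntegrable p₂ volume 0 Rρ) (hq₂ : IntervalIntegrable q₂ volume 0 Rη) :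
    mixOpF Sρ K Rρ Rη (p₁ + p₂) (q₁ + q₂) = mixOpF Sρ K Rρ Rη p₁ q₁ + mixOpF Sρ K Rρ Rη p₂ q₂ := by
  simp only [mixOpF_eq, oddConv_add hSρ hp₁ hp₂, oddConv_add hK hq₁ hq₂]
  abel

theorem mixOpG_add (hSη : Continuous Sη) (hK : Continuous K)
    (hp₁ : IntervalIntegrable p₁ volume 0 Rρ) (hq₁ : IntervalIntegrable q₁ volume 0 Rη)
    (hp₂ : IntervalIntegrable p₂ volume 0 Rρ) (hq₂ : IntervalIntegrable q₂ volume 0 Rη) :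
    mixOpG Sη K Rρ Rη α (p₁ + p₂) (q₁ + q₂)
      = mixOpG Sη K Rρ Rη α p₁ q₁ + mixOpG Sη K Rρ Rη α p₂ q₂ := by
  simp only [mixOpG_eq, oddConv_add hSη hq₁ hq₂, oddConv_add hK hp₁ hp₂, smul_add]
  abel

theorem mixOpF_smul (c : ℝ) : mixOpF Sρ K Rρ Rη (c • p) (c • q) = c • mixOpF Sρ K Rρ Rη p q := by
  simp only [mixOpF_eq, oddConv_smul, smul_add]

theorem mixOpG_smul (c : ℝ) :
    mixOpG Sη K Rρ Rη α (c • p) (c • q) = c • mixOpG Sη K Rρ Rη α p q := by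
  simp only [mixOpG_eq, oddConv_smul, smul_sub, smul_comm α c]

theorem deriv_mixOpF (hSρ : ContDiff ℝ 1 Sρ) (hK : ContDiff ℝ 1 K)
    (hp : IntervalIntegrable p volume 0 Rρ) (hq : IntervalIntegrable q volume 0 Rη) :
    deriv (mixOpF Sρ K Rρ Rη p q) = mixOpF (deriv Sρ) (deriv K) Rρ Rη p q :=
  funext fun x => ((hasDerivAt_oddConv hSρ hp x).add (hasDerivAt_oddConv hK hq x)).deriv

theorem deriv_mixOpG (hSη : ContDiff ℝ 1 Sη) (hK : ContDiff ℝ 1 K)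
    (hp : IntervalIntegrable p volume 0 Rρ) (hq : IntervalIntegrable q volume 0 Rη) :
    deriv (mixOpG Sη K Rρ Rη α p q) = mixOpG (deriv Sη) (deriv K) Rρ Rη α p q :=
  funext fun x => ((hasDerivAt_oddConv hSη hq x).sub
    ((hasDerivAt_oddConv hK hp x).const_mul α)).deriv

variable {ι : Type*} {l : Filter ι} [l.NeBot] {P Q : ι → ℝ → ℝ} {s : Set ℝ}

theorem tendstoUniformlyOn_mixOpF (hSρ : Continuous Sρ) (hK : Continuous K) (hs : IsCompact s)
    (hP : ∀ i, ContinuousOn (P i) (uIcc 0 Rρ)) (hQ : ∀ i, ContinuousOn (Q i) (uIcc 0 Rη))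
    (hPp : TendstoUniformlyOn P p l (uIcc 0 Rρ)) (hQq : TendstoUniformlyOn Q q l (uIcc 0 Rη)) :
    TendstoUniformlyOn (fun i => mixOpF Sρ K Rρ Rη (P i) (Q i)) (mixOpF Sρ K Rρ Rη p q) l s :=
  (tendstoUniformlyOn_oddConv hSρ hs hP hPp).add (tendstoUniformlyOn_oddConv hK hs hQ hQq)

theorem tendstoUniformlyOn_mixOpG (hSη : Continuous Sη) (hK : Continuous K) (hs : IsCompact s)
    (hP : ∀ i, ContinuousOn (P i) (uIcc 0 Rρ)) (hQ : ∀ i, ContinuousOn (Q i) (uIcc 0 Rη))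
    (hPp : TendstoUniformlyOn P p l (uIcc 0 Rρ)) (hQq : TendstoUniformlyOn Q q l (uIcc 0 Rη)) :
    TendstoUniformlyOn (fun i => mixOpG Sη K Rρ Rη α (P i) (Q i)) (mixOpG Sη K Rρ Rη α p q) l s :=
  (tendstoUniformlyOn_oddConv hSη hs hQ hQq).sub
    ((lipschitzWith_smul α).uniformContinuous.comp_tendstoUniformlyOn
      (tendstoUniformlyOn_oddConv hK hs hP hPp))

theorem tendstoUniformlyOn_deriv_mixOpF (hSρ : ContDiff ℝ 1 Sρ) (hK : ContDiff ℝ 1 K)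
    (hs : IsCompact s) (hP : ∀ i, ContinuousOn (P i) (uIcc 0 Rρ))
    (hQ : ∀ i, ContinuousOn (Q i) (uIcc 0 Rη))
    (hPp : TendstoUniformlyOn P p l (uIcc 0 Rρ)) (hQq : TendstoUniformlyOn Q q l (uIcc 0 Rη)) :
    TendstoUniformlyOn (fun i => deriv (mixOpF Sρ K Rρ Rη (P i) (Q i)))
      (mixOpF (deriv Sρ) (deriv K) Rρ Rη p q) l s := by
  have hderiv : (fun i => deriv (mixOpF Sρ K Rρ Rη (P i) (Q i)))
      = fun i => mixOpF (deriv Sρ) (deriv K) Rρ Rη (P i) (Q i) :=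
    funext fun i => deriv_mixOpF hSρ hK (hP i).intervalIntegrable (hQ i).intervalIntegrable
  rw [hderiv]
  exact tendstoUniformlyOn_mixOpF (hSρ.continuous_deriv le_rfl) (hK.continuous_deriv le_rfl)
    hs hP hQ hPp hQq

theorem tendstoUniformlyOn_deriv_mixOpG (hSη : ContDiff ℝ 1 Sη) (hK : ContDiff ℝ 1 K)
    (hs : IsCompact s) (hP : ∀ i, ContinuousOn (P i) (uIcc 0 Rρ))
    (hQ : ∀ i, ContinuousOn (Q i) (uIcc 0 Rη))
    (hPp : TendstoUniformlyOn P p l (uIcc 0 Rρ)) (hQq : TendstoUniformlyOn Q q l (uIcc 0 Rη)) :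
    TendstoUniformlyOn (fun i => deriv (mixOpG Sη K Rρ Rη α (P i) (Q i)))
      (mixOpG (deriv Sη) (deriv K) Rρ Rη α p q) l s := by
  have hderiv : (fun i => deriv (mixOpG Sη K Rρ Rη α (P i) (Q i)))
      = fun i => mixOpG (deriv Sη) (deriv K) Rρ Rη α (P i) (Q i) :=
    funext fun i => deriv_mixOpG hSη hK (hP i).intervalIntegrable (hQ i).intervalIntegrable
  rw [hderiv]
  exact tendstoUniformlyOn_mixOpG (hSη.continuous_deriv le_rfl) (hK.continuous_deriv le_rfl)
    hs hP hQ hPp hQq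

end MixOp

/-- The operator `T : (p,q) ↦ (f,g)` is well defined on C¹ profiles vanishing at the origin,
is linear, and is compact for the W^{1,∞} norm. -/
theorem stmt_8 (Rρ Rη α : ℝ) (hRρ : 0 < Rρ) (hRη : 0 < Rη)
    (Sρ Sη K : ℝ → ℝ)
    (hSρ : ContDiff ℝ 2 Sρ) (hSη : ContDiff ℝ 2 Sη) (hK : ContDiff ℝ 2 K)
    (hSρe : ∀ x, Sρ (-x) = Sρ x) (hSηe : ∀ x, Sη (-x) = Sη x) (hKe : ∀ x, K (-x) = K x) :
    -- f and g are C¹ and vanish at 0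
    (∀ p q : ℝ → ℝ, ContDiffOn ℝ 1 p (Set.Icc 0 Rρ) → ContDiffOn ℝ 1 q (Set.Icc 0 Rη) →
      p 0 = 0 → q 0 = 0 →
      ContDiffOn ℝ 1 (mixOpF Sρ K Rρ Rη p q) (Set.Icc 0 Rρ) ∧
      mixOpF Sρ K Rρ Rη p q 0 = 0 ∧
      ContDiffOn ℝ 1 (mixOpG Sη K Rρ Rη α p q) (Set.Icc 0 Rη) ∧
      mixOpG Sη K Rρ Rη α p q 0 = 0) ∧
    -- linearity of T
    (∀ p₁ q₁ p₂ q₂ : ℝ → ℝ,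
      ContDiffOn ℝ 1 p₁ (Set.Icc 0 Rρ) → ContDiffOn ℝ 1 q₁ (Set.Icc 0 Rη) →
      ContDiffOn ℝ 1 p₂ (Set.Icc 0 Rρ) → ContDiffOn ℝ 1 q₂ (Set.Icc 0 Rη) →
      ∀ c : ℝ,
        (∀ x, mixOpF Sρ K Rρ Rη (p₁ + p₂) (q₁ + q₂) x
            = mixOpF Sρ K Rρ Rη p₁ q₁ x + mixOpF Sρ K Rρ Rη p₂ q₂ x) ∧
        (∀ x, mixOpG Sη K Rρ Rη α (p₁ + p₂) (q₁ + q₂) x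
            = mixOpG Sη K Rρ Rη α p₁ q₁ x + mixOpG Sη K Rρ Rη α p₂ q₂ x) ∧
        (∀ x, mixOpF Sρ K Rρ Rη (c • p₁) (c • q₁) x = c * mixOpF Sρ K Rρ Rη p₁ q₁ x) ∧
        (∀ x, mixOpG Sη K Rρ Rη α (c • p₁) (c • q₁) x = c * mixOpG Sη K Rρ Rη α p₁ q₁ x)) ∧
    -- compactness of T for the W^{1,∞} norm
    (∀ p q : ℕ → ℝ → ℝ,
      (∀ n, ContDiffOn ℝ 1 (p n) (Set.Icc 0 Rρ) ∧ p n 0 = 0) →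
      (∀ n, ContDiffOn ℝ 1 (q n) (Set.Icc 0 Rη) ∧ q n 0 = 0) →
      (∃ B : ℝ, ∀ n, (∀ x ∈ Set.Icc (0 : ℝ) Rρ,
          |p n x| ≤ B ∧ |derivWithin (p n) (Set.Icc 0 Rρ) x| ≤ B) ∧
        (∀ x ∈ Set.Icc (0 : ℝ) Rη,
          |q n x| ≤ B ∧ |derivWithin (q n) (Set.Icc 0 Rη) x| ≤ B)) →
      ∃ φ : ℕ → ℕ, StrictMono φ ∧
        ∃ f g f' g' : ℝ → ℝ,
          TendstoUniformlyOn (fun k => mixOpF Sρ K Rρ Rη (p (φ k)) (q (φ k))) f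
            atTop (Set.Icc 0 Rρ) ∧
          TendstoUniformlyOn (fun k => deriv (mixOpF Sρ K Rρ Rη (p (φ k)) (q (φ k)))) f'
            atTop (Set.Icc 0 Rρ) ∧
          TendstoUniformlyOn (fun k => mixOpG Sη K Rρ Rη α (p (φ k)) (q (φ k))) g
            atTop (Set.Icc 0 Rη) ∧
          TendstoUniformlyOn (fun k => deriv (mixOpG Sη K Rρ Rη α (p (φ k)) (q (φ k)))) g'
            atTop (Set.Icc 0 Rη)) := by
  have hSρ1 : ContDiff ℝ 1 Sρ := hSρ.of_le one_le_two
  have hSη1 : ContDiff ℝ 1 Sη := hSη.of_le one_le_two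
  have hK1 : ContDiff ℝ 1 K := hK.of_le one_le_two
  have hi {a : ℝ} {u : ℝ → ℝ} (hu : ContDiffOn ℝ 1 u (uIcc 0 a)) :
      IntervalIntegrable u volume 0 a := hu.continuousOn.intervalIntegrable
  rw [← uIcc_of_le hRρ.le, ← uIcc_of_le hRη.le]
  refine ⟨fun p q hp hq _ _ => ?_, fun p₁ q₁ p₂ q₂ hp₁ hq₁ hp₂ hq₂ c => ?_, ?_⟩
  · exact ⟨(contDiff_mixOpF hSρ hK (hi hp) (hi hq)).contDiffOn, mixOpF_zero_of_even hSρe hKe,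
      (contDiff_mixOpG hSη hK (hi hp) (hi hq)).contDiffOn, mixOpG_zero_of_even hSηe hKe⟩
  · exact ⟨congrFun (mixOpF_add hSρ.continuous hK.continuous (hi hp₁) (hi hq₁) (hi hp₂) (hi hq₂)),
      congrFun (mixOpG_add hSη.continuous hK.continuous (hi hp₁) (hi hq₁) (hi hp₂) (hi hq₂)),
      congrFun (mixOpF_smul c), congrFun (mixOpG_smul c)⟩
  rintro p q hp hq ⟨B, hB⟩
  obtain ⟨φ₁, hφ₁, p', hp'⟩ := exists_subseq_tendstoUniformlyOn_uIcc
    (fun n => (hp n).1.differentiableOn one_ne_zero) fun n => (hB n).1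
  obtain ⟨φ₂, hφ₂, q', hq'⟩ := exists_subseq_tendstoUniformlyOn_uIcc
    (fun n => (hq (φ₁ n)).1.differentiableOn one_ne_zero) fun n => (hB (φ₁ n)).2
  have hpφ := hp'.seq_tendstoUniformlyOn φ₂ hφ₂.tendsto_atTop
  have hpc (k : ℕ) := (hp (φ₁ (φ₂ k))).1.continuousOn
  have hqc (k : ℕ) := (hq (φ₁ (φ₂ k))).1.continuousOn
  exact ⟨φ₁ ∘ φ₂, hφ₁.comp hφ₂, _, _, _, _,
    tendstoUniformlyOn_mixOpF hSρ.continuous hK.continuous isCompact_uIcc hpc hqc hpφ hq',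
    tendstoUniformlyOn_deriv_mixOpF hSρ1 hK1 isCompact_uIcc hpc hqc hpφ hq',
    tendstoUniformlyOn_mixOpG hSη.continuous hK.continuous isCompact_uIcc hpc hqc hpφ hq',
    tendstoUniformlyOn_deriv_mixOpG hSη1 hK1 isCompact_uIcc hpc hqc hpφ hq'⟩
end

section
/- Let n≥1, α>0, N,M ∈ ℕ, masses m_X^1,…,m_X^N>0 and m_Y^1,…,m_Y^M>0, and let S_ρ, S_η, K : ℝⁿ→ℝ be C¹ and even (so their gradients are odd). Suppose (X_1,…,X_N,Y_1,…,Y_M):[0,T]→(ℝⁿ)^{N+M} is differentiable and solves the predator–prey particle system Ẋ_i = −Σ_{k=1}^N m_X^k ∇S_ρ(X_i−X_k) − Σ_{k=1}^M m_Y^k ∇K(X_i−Y_k), Ẏ_j = −Σ_{k=1}^M m_Y^k ∇S_η(Y_j−Y_k) + α Σ_{k=1}^N m_X^k ∇K(Y_j−X_k) for i=1,…,N, j=1,…,M. Then the joint centre of mass C_α(t) = α Σ_{i=1}^N m_X^i X_i(t) − Σ_{j=1}^M m_Y^j Y_j(t) is constant on [0,T]. -/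
/-!
Differentiating `C_α` gives `α` times the `X`-equation summed with weights `m_X^i` minus the
`Y`-equation summed with weights `m_Y^j`. The gradient of an even function is odd, so each
self-interaction double sum `Σ_i Σ_k m^i m^k ∇S(x_i - x_k)` is antisymmetric under `i ↔ k` and
vanishes, while the two cross-interaction sums through `∇K` are negatives of each other; the
factor `α` in the `Y`-equation makes them cancel.
-/

open Finset

theorem Function.Even.gradient_neg {E : Type*} [NormedAddCommGroup E] [InnerProductSpace ℝ E]
    [CompleteSpace E] {G : E → ℝ} (hG : G.Even) (x : E) :
    gradient G (-x) = -gradient G x := by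
  have hfderiv : fderiv ℝ G x = -fderiv ℝ G (-x) := by
    have hcomp := (ContinuousLinearEquiv.neg ℝ (M := E)).comp_right_fderiv (f := G) (x := x)
    rw [show G ∘ ContinuousLinearEquiv.neg ℝ = G from funext hG] at hcomp
    rw [hcomp]
    ext v
    simp
  simp only [gradient, hfderiv, map_neg, neg_neg]

theorem sum_sum_eq_zero_of_antisymm {ι M : Type*} [Fintype ι] [AddCommGroup M]
    [IsAddTorsionFree M] {f : ι → ι → M} (hf : ∀ i k, f k i = -f i k) :
    ∑ i, ∑ k, f i k = 0 :=
  self_eq_neg.mp <| by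
    calc ∑ i, ∑ k, f i k = ∑ k, ∑ i, f i k := sum_comm
      _ = ∑ k, ∑ i, -f k i := sum_congr rfl fun k _ => sum_congr rfl fun i _ => hf k i
      _ = -∑ i, ∑ k, f i k := by simp only [sum_neg_distrib]

section Interaction

variable {ι κ E : Type*} [Fintype ι] [Fintype κ] [NormedAddCommGroup E] [InnerProductSpace ℝ E]
  [CompleteSpace E] {G : E → ℝ}

theorem Function.Even.sum_smul_sum_smul_gradient_sub (hG : G.Even) (m : ι → ℝ) (x : ι → E) :
    ∑ i, m i • ∑ k, m k • gradient G (x i - x k) = 0 := by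
  have := IsAddTorsionFree.of_isTorsionFree ℝ E
  simp_rw [smul_sum, smul_smul]
  refine sum_sum_eq_zero_of_antisymm fun i k => ?_
  rw [← neg_sub, hG.gradient_neg, smul_neg, mul_comm]

theorem Function.Even.sum_smul_sum_smul_gradient_sub_comm (hG : G.Even) (m : ι → ℝ)
    (n : κ → ℝ) (x : ι → E) (y : κ → E) :
    ∑ j, n j • ∑ k, m k • gradient G (y j - x k)
      = -∑ i, m i • ∑ k, n k • gradient G (x i - y k) := by
  simp_rw [smul_sum, smul_smul, sum_comm (γ := κ), ← sum_neg_distrib]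
  refine sum_congr rfl fun i _ => sum_congr rfl fun j _ => ?_
  rw [← neg_sub, hG.gradient_neg, smul_neg, mul_comm]

end Interaction

theorem stmt_10_general (n : ℕ) (α : ℝ) (N M : ℕ)
    (mX : Fin N → ℝ) (mY : Fin M → ℝ)
    (Sρ Sη K : EuclideanSpace ℝ (Fin n) → ℝ)
    (hSρe : ∀ x, Sρ (-x) = Sρ x) (hSηe : ∀ x, Sη (-x) = Sη x) (hKe : ∀ x, K (-x) = K x)
    (T : ℝ)
    (X : Fin N → ℝ → EuclideanSpace ℝ (Fin n)) (Y : Fin M → ℝ → EuclideanSpace ℝ (Fin n))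
    (hX : ∀ i, ∀ t ∈ Set.Icc (0 : ℝ) T, HasDerivAt (X i)
      (-(∑ k, mX k • gradient Sρ (X i t - X k t)) - ∑ k, mY k • gradient K (X i t - Y k t)) t)
    (hY : ∀ j, ∀ t ∈ Set.Icc (0 : ℝ) T, HasDerivAt (Y j)
      (-(∑ k, mY k • gradient Sη (Y j t - Y k t)) + α • ∑ k, mX k • gradient K (Y j t - X k t)) t) :
    ∀ t ∈ Set.Icc (0 : ℝ) T,
      (α • ∑ i, mX i • X i t) - ∑ j, mY j • Y j t
        = (α • ∑ i, mX i • X i 0) - ∑ j, mY j • Y j 0 := by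
  set C : ℝ → EuclideanSpace ℝ (Fin n) := fun t => (α • ∑ i, mX i • X i t) - ∑ j, mY j • Y j t
  have hC : ∀ t ∈ Set.Icc (0 : ℝ) T, HasDerivAt C 0 t := by
    intro t ht
    have hderiv :=
      ((HasDerivAt.fun_sum (u := univ) fun i _ => (hX i t ht).const_smul (mX i)).const_smul α).sub
        (HasDerivAt.fun_sum (u := univ) fun j _ => (hY j t ht).const_smul (mY j))
    refine hderiv.congr_deriv ?_
    have hself_X := Function.Even.sum_smul_sum_smul_gradient_sub hSρe mX fun i => X i t
    have hself_Y := Function.Even.sum_smul_sum_smul_gradient_sub hSηe mY fun j => Y j t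
    have hcross := Function.Even.sum_smul_sum_smul_gradient_sub_comm hKe mX mY
      (fun i => X i t) (fun j => Y j t)
    simp only [smul_sub, smul_neg, smul_add, smul_comm (mY _) α, ← smul_sum, sum_sub_distrib,
      sum_add_distrib, sum_neg_distrib]
    rw [hself_X, hself_Y, hcross]
    module
  exact constant_of_has_deriv_right_zero (fun s hs => (hC s hs).continuousAt.continuousWithinAt)
    fun s hs => (hC s (Set.mem_Icc_of_Ico hs)).hasDerivWithinAt

/-- Conservation of the joint centre of mass `C_α = α Σ m_X^i X_i − Σ m_Y^j Y_j` for the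
predator–prey particle system. -/
theorem stmt_10 (n : ℕ) (hn : 1 ≤ n) (α : ℝ) (hα : 0 < α) (N M : ℕ)
    (mX : Fin N → ℝ) (mY : Fin M → ℝ) (hmX : ∀ i, 0 < mX i) (hmY : ∀ j, 0 < mY j)
    (Sρ Sη K : EuclideanSpace ℝ (Fin n) → ℝ)
    (hSρ : ContDiff ℝ 1 Sρ) (hSη : ContDiff ℝ 1 Sη) (hK : ContDiff ℝ 1 K)
    (hSρe : ∀ x, Sρ (-x) = Sρ x) (hSηe : ∀ x, Sη (-x) = Sη x) (hKe : ∀ x, K (-x) = K x)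
    (T : ℝ)
    (X : Fin N → ℝ → EuclideanSpace ℝ (Fin n)) (Y : Fin M → ℝ → EuclideanSpace ℝ (Fin n))
    (hX : ∀ i, ∀ t ∈ Set.Icc (0 : ℝ) T, HasDerivAt (X i)
      (-(∑ k, mX k • gradient Sρ (X i t - X k t)) - ∑ k, mY k • gradient K (X i t - Y k t)) t)
    (hY : ∀ j, ∀ t ∈ Set.Icc (0 : ℝ) T, HasDerivAt (Y j)
      (-(∑ k, mY k • gradient Sη (Y j t - Y k t)) + α • ∑ k, mX k • gradient K (Y j t - X k t)) t) :
    ∀ t ∈ Set.Icc (0 : ℝ) T,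
      (α • ∑ i, mX i • X i t) - ∑ j, mY j • Y j t
        = (α • ∑ i, mX i • X i 0) - ∑ j, mY j • Y j 0 :=
  stmt_10_general n α N M mX mY Sρ Sη K hSρe hSηe hKe T X Y hX hY
end

section
/- Let D>0 and z̄<z̃ be real numbers, and set λ = (3(z̃−z̄)/D)^{1/3}. Then: (i) λ is the unique real solution of (z̄−z̃) + (D/3)λ³ = 0; (ii) for every z∈[z̄,z̃] there is a unique v(z) ∈ [0,λ] satisfying (z̄−z) + (D/6)(3λ² v(z) − v(z)³) = 0; (iii) the resulting function v is a continuous, strictly increasing bijection from [z̄,z̃] onto [0,λ] with v(z̄)=0 and v(z̃)=λ, and equivalently v is the inverse of the map x ↦ z̄ + ∫₀^x (D/2)(λ²−s²)ds on [0,λ], i.e. the pseudo-inverse of the cumulative distribution of the Barenblatt profile x ↦ (D/2)(λ²−x²)₊; (iv) for every z∈[z̄,z̃], λ − v(z) ≤ √(3(z̃−z)/(Dλ)), so sup_{z∈[z̄,z̃)} (λ−v(z))/(z̃−z)^{1/2} < ∞. -/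
/-!
The cumulative distribution `g(w) = z̄ + (D/6)(3λ²w − w³)` of the Barenblatt profile
`(D/2)(λ² − w²)₊` increases strictly from `z̄` to `z̃` on `[0, λ]`, so `v(z)` is unique.
The trigonometric solution of the depressed cubic gives it explicitly: since
`3λ²(2λ sin φ) − (2λ sin φ)³ = 2λ³ sin 3φ`, the root is
`v(z) = 2λ sin(arcsin((z − z̄)/(z̃ − z̄))/3)`, visibly continuous and strictly increasing.
The Hölder bound comes from the factorisation
`z̃ − g(w) = (D/6)(λ − w)²(2λ + w) ≥ (Dλ/3)(λ − w)²`.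
-/

open Real Set

noncomputable def barenblattCDF (D lam zbar w : ℝ) : ℝ :=
  zbar + D / 6 * (3 * lam ^ 2 * w - w ^ 3)

noncomputable def barenblattQuantile (lam zbar ztil z : ℝ) : ℝ :=
  2 * lam * sin (arcsin ((z - zbar) / (ztil - zbar)) / 3)

theorem div_rpow_one_div_two_le_sqrt_of_le_sqrt_mul {x y c : ℝ} (hc : 0 ≤ c) (hy : 0 < y)
    (h : x ≤ √(c * y)) : x / y ^ ((1 : ℝ) / 2) ≤ √c := by
  rwa [← sqrt_eq_rpow, div_le_iff₀ (sqrt_pos.mpr hy), ← sqrt_mul hc]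

theorem sub_div_sub_mem_Icc {a b z : ℝ} (hab : a < b) (hz : z ∈ Icc a b) :
    (z - a) / (b - a) ∈ Icc (-1) 1 := by
  have hd : 0 < b - a := sub_pos.mpr hab
  exact ⟨by rw [le_div_iff₀ hd]; linarith [hz.1], by rw [div_le_one hd]; linarith [hz.2]⟩

theorem rpow_one_div_three_pow_three {x : ℝ} (hx : 0 ≤ x) : (x ^ ((1 : ℝ) / 3)) ^ 3 = x := by
  simpa [one_div] using rpow_inv_natCast_pow hx (n := 3) three_ne_zero

section Barenblatt

variable {D lam zbar ztil : ℝ}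

theorem pos_of_mul_pow_three_eq (hD : 0 < D) (hz : zbar < ztil)
    (hlam : D * lam ^ 3 = 3 * (ztil - zbar)) : 0 < lam := by
  have : 0 < D * lam ^ 3 := by rw [hlam]; linarith
  exact (Odd.pow_pos_iff (by decide)).mp (pos_of_mul_pos_right this hD.le)

theorem add_mul_pow_three_eq_zero_iff (hD : 0 < D) (hlam : D * lam ^ 3 = 3 * (ztil - zbar))
    (r : ℝ) : (zbar - ztil) + (D / 3) * r ^ 3 = 0 ↔ r = lam := by
  constructor
  · intro h
    exact (Odd.pow_inj (n := 3) (by decide)).mp (mul_left_cancel₀ hD.ne' (by linarith))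
  · rintro rfl
    linarith

theorem barenblattCDF_eq_iff {w z : ℝ} :
    barenblattCDF D lam zbar w = z ↔ (zbar - z) + D / 6 * (3 * lam ^ 2 * w - w ^ 3) = 0 := by
  unfold barenblattCDF
  constructor <;> intro h <;> linarith

theorem barenblattCDF_zero : barenblattCDF D lam zbar 0 = zbar := by
  simp [barenblattCDF]

theorem barenblattCDF_self (hlam : D * lam ^ 3 = 3 * (ztil - zbar)) :
    barenblattCDF D lam zbar lam = ztil := by
  unfold barenblattCDF
  linear_combination hlam / 3

theorem barenblattCDF_sub (a b : ℝ) :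
    barenblattCDF D lam zbar b - barenblattCDF D lam zbar a =
      D / 6 * (b - a) * (3 * lam ^ 2 - a ^ 2 - a * b - b ^ 2) := by
  unfold barenblattCDF
  ring

theorem barenblattCDF_strictMonoOn (hD : 0 < D) :
    StrictMonoOn (barenblattCDF D lam zbar) (Icc 0 lam) := by
  rintro a ⟨ha0, hal⟩ b ⟨hb0, hbl⟩ hab
  have hfactor : 0 < 3 * lam ^ 2 - a ^ 2 - a * b - b ^ 2 := by nlinarith
  rw [← sub_pos, barenblattCDF_sub]
  exact mul_pos (mul_pos (by positivity) (sub_pos.mpr hab)) hfactor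

theorem mapsTo_barenblattCDF (hD : 0 < D) (hz : zbar < ztil)
    (hlam : D * lam ^ 3 = 3 * (ztil - zbar)) :
    MapsTo (barenblattCDF D lam zbar) (Icc 0 lam) (Icc zbar ztil) := by
  have hlam0 := pos_of_mul_pow_three_eq hD hz hlam
  have hmono := (barenblattCDF_strictMonoOn (lam := lam) (zbar := zbar) hD).monotoneOn
  intro w hw
  constructor
  · calc zbar = barenblattCDF D lam zbar 0 := barenblattCDF_zero.symm
      _ ≤ _ := hmono (left_mem_Icc.mpr hlam0.le) hw hw.1
  · calc barenblattCDF D lam zbar w ≤ barenblattCDF D lam zbar lam :=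
          hmono hw (right_mem_Icc.mpr hlam0.le) hw.2
      _ = ztil := barenblattCDF_self hlam

theorem add_integral_eq_barenblattCDF (x : ℝ) :
    zbar + ∫ s in (0 : ℝ)..x, (D / 2) * (lam ^ 2 - s ^ 2) = barenblattCDF D lam zbar x := by
  rw [intervalIntegral.integral_const_mul, intervalIntegral.integral_sub intervalIntegrable_const
    (intervalIntegral.intervalIntegrable_pow 2), intervalIntegral.integral_const, integral_pow,
    barenblattCDF]
  simp only [smul_eq_mul]
  ring

theorem sub_le_sqrt_barenblattCDF (hD : 0 < D) (hlam0 : 0 < lam) {w : ℝ}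
    (hw : w ∈ Icc 0 lam) :
    lam - w ≤
      √(3 * (barenblattCDF D lam zbar lam - barenblattCDF D lam zbar w) / (D * lam)) := by
  refine (le_abs_self _).trans (abs_le_sqrt ?_)
  rw [le_div_iff₀ (by positivity), barenblattCDF_sub]
  nlinarith [mul_nonneg (mul_nonneg hD.le hw.1) (sq_nonneg (lam - w))]

theorem barenblattQuantile_left : barenblattQuantile lam zbar ztil zbar = 0 := by
  simp [barenblattQuantile]

theorem barenblattQuantile_right (hz : zbar < ztil) :
    barenblattQuantile lam zbar ztil ztil = lam := by
  rw [barenblattQuantile, div_self (sub_ne_zero.mpr hz.ne'), arcsin_one,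
    div_div, show π / (2 * 3) = π / 6 by ring, sin_pi_div_six]
  ring

theorem continuous_barenblattQuantile : Continuous (barenblattQuantile lam zbar ztil) := by
  unfold barenblattQuantile
  fun_prop

theorem barenblattQuantile_strictMonoOn (hlam0 : 0 < lam) (hz : zbar < ztil) :
    StrictMonoOn (barenblattQuantile lam zbar ztil) (Icc zbar ztil) := by
  have hangle : ∀ z ∈ Icc zbar ztil,
      arcsin ((z - zbar) / (ztil - zbar)) / 3 ∈ Icc (-(π / 2)) (π / 2) := fun z _ =>
    ⟨by linarith [neg_pi_div_two_le_arcsin ((z - zbar) / (ztil - zbar)), pi_pos],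
      by linarith [arcsin_le_pi_div_two ((z - zbar) / (ztil - zbar)), pi_pos]⟩
  intro a ha b hb hab
  refine mul_lt_mul_of_pos_left (strictMonoOn_sin (hangle a ha) (hangle b hb) ?_) (by positivity)
  exact div_lt_div_of_pos_right (strictMonoOn_arcsin (sub_div_sub_mem_Icc hz ha)
    (sub_div_sub_mem_Icc hz hb) (div_lt_div_of_pos_right (by linarith) (sub_pos.mpr hz)))
    three_pos

theorem mapsTo_barenblattQuantile (hlam0 : 0 < lam) (hz : zbar < ztil) :
    MapsTo (barenblattQuantile lam zbar ztil) (Icc zbar ztil) (Icc 0 lam) := by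
  have hmono := (barenblattQuantile_strictMonoOn hlam0 hz).monotoneOn
  intro z hz'
  constructor
  · calc 0 = barenblattQuantile lam zbar ztil zbar := barenblattQuantile_left.symm
      _ ≤ _ := hmono (left_mem_Icc.mpr hz.le) hz' hz'.1
  · calc barenblattQuantile lam zbar ztil z ≤ barenblattQuantile lam zbar ztil ztil :=
          hmono hz' (right_mem_Icc.mpr hz.le) hz'.2
      _ = lam := barenblattQuantile_right hz

theorem barenblattCDF_two_mul_sin (φ : ℝ) :
    barenblattCDF D lam zbar (2 * lam * sin φ) = zbar + D * lam ^ 3 / 3 * sin (3 * φ) := by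
  rw [barenblattCDF, sin_three_mul]
  ring

theorem barenblattCDF_barenblattQuantile (hz : zbar < ztil)
    (hlam : D * lam ^ 3 = 3 * (ztil - zbar)) {z : ℝ} (hz' : z ∈ Icc zbar ztil) :
    barenblattCDF D lam zbar (barenblattQuantile lam zbar ztil z) = z := by
  obtain ⟨hneg, hone⟩ := sub_div_sub_mem_Icc hz hz'
  rw [barenblattQuantile, barenblattCDF_two_mul_sin, mul_div_cancel₀ _ three_ne_zero,
    sin_arcsin hneg hone, hlam]
  field_simp [sub_ne_zero.mpr hz.ne']
  ring

theorem eq_barenblattQuantile_of_barenblattCDF_eq (hD : 0 < D) (hz : zbar < ztil)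
    (hlam : D * lam ^ 3 = 3 * (ztil - zbar)) {z w : ℝ} (hz' : z ∈ Icc zbar ztil)
    (hw : w ∈ Icc 0 lam) (h : barenblattCDF D lam zbar w = z) :
    w = barenblattQuantile lam zbar ztil z :=
  (barenblattCDF_strictMonoOn hD).injOn hw
    (mapsTo_barenblattQuantile (pos_of_mul_pow_three_eq hD hz hlam) hz hz')
    (h.trans (barenblattCDF_barenblattQuantile hz hlam hz').symm)

theorem barenblattQuantile_barenblattCDF (hD : 0 < D) (hz : zbar < ztil)
    (hlam : D * lam ^ 3 = 3 * (ztil - zbar)) {w : ℝ} (hw : w ∈ Icc 0 lam) :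
    barenblattQuantile lam zbar ztil (barenblattCDF D lam zbar w) = w :=
  (eq_barenblattQuantile_of_barenblattCDF_eq hD hz hlam (mapsTo_barenblattCDF hD hz hlam hw)
    hw rfl).symm

theorem image_barenblattQuantile (hD : 0 < D) (hz : zbar < ztil)
    (hlam : D * lam ^ 3 = 3 * (ztil - zbar)) :
    barenblattQuantile lam zbar ztil '' Icc zbar ztil = Icc 0 lam :=
  (mapsTo_barenblattQuantile (pos_of_mul_pow_three_eq hD hz hlam) hz).image_subset.antisymm
    fun _ hw => ⟨_, mapsTo_barenblattCDF hD hz hlam hw,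
      barenblattQuantile_barenblattCDF hD hz hlam hw⟩

theorem sub_barenblattQuantile_le_sqrt (hD : 0 < D) (hz : zbar < ztil)
    (hlam : D * lam ^ 3 = 3 * (ztil - zbar)) {z : ℝ} (hz' : z ∈ Icc zbar ztil) :
    lam - barenblattQuantile lam zbar ztil z ≤ √(3 * (ztil - z) / (D * lam)) := by
  have hlam0 := pos_of_mul_pow_three_eq hD hz hlam
  simpa only [barenblattCDF_barenblattQuantile hz hlam hz', barenblattCDF_self hlam] using
    sub_le_sqrt_barenblattCDF hD hlam0 (zbar := zbar) (mapsTo_barenblattQuantile hlam0 hz hz')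

end Barenblatt

/-- Solution of the δ = 0 limiting system: the unique Barenblatt-type profile, its
pseudo-inverse `v`, and the weighted 1/2-Hölder bound `λ − v(z) ≤ √(3(z̃−z)/(Dλ))`. -/
theorem stmt_12 (D zbar ztil : ℝ) (hD : 0 < D) (hz : zbar < ztil)
    (lam : ℝ) (hlam : lam = (3 * (ztil - zbar) / D) ^ ((1 : ℝ) / 3)) :
    (∀ r : ℝ, (zbar - ztil) + (D / 3) * r ^ 3 = 0 ↔ r = lam) ∧
    ∃ v : ℝ → ℝ,
      (∀ z ∈ Set.Icc zbar ztil, v z ∈ Set.Icc 0 lam ∧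
        (zbar - z) + (D / 6) * (3 * lam ^ 2 * v z - (v z) ^ 3) = 0) ∧
      (∀ z ∈ Set.Icc zbar ztil, ∀ w ∈ Set.Icc (0 : ℝ) lam,
        (zbar - z) + (D / 6) * (3 * lam ^ 2 * w - w ^ 3) = 0 → w = v z) ∧
      ContinuousOn v (Set.Icc zbar ztil) ∧
      StrictMonoOn v (Set.Icc zbar ztil) ∧
      v '' Set.Icc zbar ztil = Set.Icc 0 lam ∧
      v zbar = 0 ∧ v ztil = lam ∧
      (∀ x ∈ Set.Icc (0 : ℝ) lam,
        v (zbar + ∫ s in (0 : ℝ)..x, (D / 2) * (lam ^ 2 - s ^ 2)) = x) ∧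
      (∀ z ∈ Set.Icc zbar ztil, lam - v z ≤ Real.sqrt (3 * (ztil - z) / (D * lam))) ∧
      BddAbove ((fun z => (lam - v z) / (ztil - z) ^ ((1 : ℝ) / 2)) '' Set.Ico zbar ztil) := by
  have hlam3 : D * lam ^ 3 = 3 * (ztil - zbar) := by
    rw [hlam, rpow_one_div_three_pow_three (div_nonneg (by linarith) hD.le)]
    field_simp
  have hlam0 := pos_of_mul_pow_three_eq hD hz hlam3
  refine ⟨add_mul_pow_three_eq_zero_iff hD hlam3, barenblattQuantile lam zbar ztil,
    fun z hz' => ⟨mapsTo_barenblattQuantile hlam0 hz hz',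
      barenblattCDF_eq_iff.mp (barenblattCDF_barenblattQuantile hz hlam3 hz')⟩,
    fun z hz' w hw h =>
      eq_barenblattQuantile_of_barenblattCDF_eq hD hz hlam3 hz' hw (barenblattCDF_eq_iff.mpr h),
    continuous_barenblattQuantile.continuousOn, barenblattQuantile_strictMonoOn hlam0 hz,
    image_barenblattQuantile hD hz hlam3, barenblattQuantile_left, barenblattQuantile_right hz,
    fun x hx => by
      rw [add_integral_eq_barenblattCDF, barenblattQuantile_barenblattCDF hD hz hlam3 hx],
    fun z hz' => sub_barenblattQuantile_le_sqrt hD hz hlam3 hz', ⟨√(3 / (D * lam)), ?_⟩⟩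
  rintro _ ⟨z, hz', rfl⟩
  refine div_rpow_one_div_two_le_sqrt_of_le_sqrt_mul (by positivity) (sub_pos.mpr hz'.2) ?_
  simpa only [div_mul_eq_mul_div] using
    sub_barenblattQuantile_le_sqrt hD hz hlam3 (Ico_subset_Icc_self hz')
end
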